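/- arXiv:1808.08400 — 3 statements merged into one kernel-verified Lean document; each statement's English description precedes it below -/
import Mathlib

section
/- Among all product probability measures μ₁ ⊗ μ₂ on a product measurable space E₁ × E₂ that are absolutely continuous dominating measures for a probability measure π (i.e., π ≪ μ₁ ⊗ μ₂), the product of the marginals π₁ ⊗ π₂ of π minimizes the KL divergence KL(π ‖ μ₁ ⊗ μ₂). -/
/-!
Disintegrating `π` along either coordinate, the chain rule for the KL divergence gives
`KL(π ‖ μ₁ ⊗ μ₂) = KL(π₁ ‖ μ₁) + KL(π ‖ π₁ ⊗ μ₂)` and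
`KL(π ‖ π₁ ⊗ μ₂) = KL(π₂ ‖ μ₂) + KL(π ‖ π₁ ⊗ π₂)`.
Hence `KL(π ‖ μ₁ ⊗ μ₂)` exceeds `KL(π ‖ π₁ ⊗ π₂)` by `KL(π₁ ‖ μ₁) + KL(π₂ ‖ μ₂) ≥ 0`.
-/

open MeasureTheory Classical

/-- The Kullback–Leibler divergence: `∫ log (dπ/dν) dπ` when `π ≪ ν` (with an integrable
log-density), and `+∞` otherwise. -/
noncomputable def klDiv' {α : Type*} [MeasurableSpace α] (π ν : Measure α) : EReal :=
  if π ≪ ν ∧ Integrable (fun x => Real.log ((π.rnDeriv ν x).toReal)) π then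
    ((∫ x, Real.log ((π.rnDeriv ν x).toReal) ∂π : ℝ) : EReal)
  else ⊤

open InformationTheory ProbabilityTheory

section

variable {α β : Type*} [MeasurableSpace α] [MeasurableSpace β]

/-- Mathlib's `klDiv μ ν` is `ENNReal.ofReal (∫ llr μ ν ∂μ + ν univ - μ univ)`: for probability
measures the correction term vanishes, and Gibbs' inequality makes `ENNReal.ofReal` lossless. -/
lemma klDiv'_eq_coe_klDiv (μ ν : Measure α) [IsProbabilityMeasure μ] [IsProbabilityMeasure ν] :
    klDiv' μ ν = klDiv μ ν := by
  unfold klDiv'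
  split_ifs with h
  · have hnonneg := integral_llr_add_sub_measure_univ_nonneg h.1 h.2
    rw [klDiv_of_ac_of_integrable h.1 h.2, EReal.coe_ennreal_ofReal, max_eq_left hnonneg]
    simp [llr]
  · rw [klDiv_eq_top_iff.mpr fun hac hint => h ⟨hac, hint⟩]
    rfl

lemma klDiv_map_swap (μ ν : Measure (α × β)) [IsFiniteMeasure μ] [IsFiniteMeasure ν] :
    klDiv (μ.map Prod.swap) (ν.map Prod.swap) = klDiv μ ν := by
  refine le_antisymm (klDiv_map_le μ ν measurable_swap) ?_
  calc klDiv μ ν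
      = klDiv ((μ.map Prod.swap).map Prod.swap) ((ν.map Prod.swap).map Prod.swap) := by
        simp only [Measure.map_map measurable_swap measurable_swap, Prod.swap_swap_eq,
          Measure.map_id]
    _ ≤ klDiv (μ.map Prod.swap) (ν.map Prod.swap) := klDiv_map_le _ _ measurable_swap

lemma klDiv_prod_eq_klDiv_fst_add [StandardBorelSpace β] (π : Measure (α × β))
    [IsFiniteMeasure π] (μ : Measure α) [IsFiniteMeasure μ] (ν : Measure β)
    [IsProbabilityMeasure ν] :
    klDiv π (μ.prod ν) = klDiv π.fst μ + klDiv π (π.fst.prod ν) := by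
  have : Nonempty β := nonempty_of_isProbabilityMeasure ν
  have h := klDiv_compProd_eq_add π.fst μ π.condKernel (Kernel.const α ν)
  rwa [Measure.disintegrate, Measure.compProd_const, Measure.compProd_const] at h

lemma klDiv_prod_eq_klDiv_snd_add [StandardBorelSpace α] (π : Measure (α × β))
    [IsFiniteMeasure π] (μ : Measure α) [IsProbabilityMeasure μ] (ν : Measure β)
    [IsFiniteMeasure ν] :
    klDiv π (μ.prod ν) = klDiv π.snd ν + klDiv π (μ.prod π.snd) := by
  rw [← klDiv_map_swap π, ← klDiv_map_swap π (μ.prod π.snd), Measure.prod_swap,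
    Measure.prod_swap, ← Measure.fst_map_swap]
  exact klDiv_prod_eq_klDiv_fst_add _ _ _

end

theorem stmt_1_general {E₁ E₂ : Type*} [MeasurableSpace E₁] [MeasurableSpace E₂]
    [StandardBorelSpace E₁] [StandardBorelSpace E₂]
    (π : Measure (E₁ × E₂)) [IsProbabilityMeasure π]
    (μ₁ : Measure E₁) (μ₂ : Measure E₂)
    [IsProbabilityMeasure μ₁] [IsProbabilityMeasure μ₂] :
    klDiv' π ((π.map Prod.fst).prod (π.map Prod.snd)) ≤ klDiv' π (μ₁.prod μ₂) := by
  change klDiv' π (π.fst.prod π.snd) ≤ _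
  rw [klDiv'_eq_coe_klDiv, klDiv'_eq_coe_klDiv, EReal.coe_ennreal_le_coe_ennreal_iff,
    klDiv_prod_eq_klDiv_fst_add π μ₁ μ₂, klDiv_prod_eq_klDiv_snd_add π π.fst μ₂]
  exact le_add_self.trans le_add_self

/-- Among all product probability measures `μ₁ ⊗ μ₂` dominating a probability
measure `π` on `E₁ × E₂`, the product `π₁ ⊗ π₂` of the marginals of `π` minimizes the KL
divergence `KL(π ‖ μ₁ ⊗ μ₂)`. -/
theorem stmt_1 {E₁ E₂ : Type*} [MeasurableSpace E₁] [MeasurableSpace E₂]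
    [StandardBorelSpace E₁] [StandardBorelSpace E₂]
    (π : Measure (E₁ × E₂)) [IsProbabilityMeasure π]
    (μ₁ : Measure E₁) (μ₂ : Measure E₂)
    [IsProbabilityMeasure μ₁] [IsProbabilityMeasure μ₂]
    (hac : π ≪ μ₁.prod μ₂) :
    klDiv' π ((π.map Prod.fst).prod (π.map Prod.snd)) ≤ klDiv' π (μ₁.prod μ₂) :=
  stmt_1_general π μ₁ μ₂
end

section
/- Equality holds in the KL minimization of Theorem 1 if and only if h₁ = f₁ almost everywhere on {f₁ > 0} and h₂ = f₂ almost everywhere on {f₂ > 0}, provided the KL divergence KL(f ‖ f₁⊗f₂) is finite. -/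
open MeasureTheory

open Real ENNReal

section PointwiseLemmas

lemma key_ineq {p q : ℝ} (hp : 0 ≤ p) (hq : 0 ≤ q) (h : 0 < p → 0 < q) :
    p - q ≤ p * Real.log (p / q) := by
  rcases hp.eq_or_lt with h0 | h0
  · simp [← h0]; linarith
  · have hq' := h h0
    have ht : 0 < q / p := div_pos hq' h0
    have h1 : Real.log (q / p) ≤ q / p - 1 := Real.log_le_sub_one_of_pos ht
    have h2 : Real.log (p / q) = - Real.log (q / p) := by
      rw [← Real.log_inv]; congr 1; rw [inv_div]
    have h3 : p * (q / p) = q := by field_simp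
    rw [h2]
    nlinarith [mul_le_mul_of_nonneg_left h1 hp]

lemma key_eq {p q : ℝ} (hp : 0 < p) (hq : 0 < q)
    (heq : p * Real.log (p / q) = p - q) : q = p := by
  by_contra hne
  have ht : q / p ≠ 1 := by
    intro h
    exact hne (by field_simp at h; linarith)
  have h1 : Real.log (q / p) < q / p - 1 := Real.log_lt_sub_one_of_pos (div_pos hq hp) ht
  have h2 : Real.log (p / q) = - Real.log (q / p) := by
    rw [← Real.log_inv]; congr 1; rw [inv_div]
  have h3 : p * (q / p) = q := by field_simp
  rw [h2] at heq
  nlinarith [mul_lt_mul_of_pos_left h1 hp]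

end PointwiseLemmas

section Gibbs

variable {α : Type*} [MeasurableSpace α] {μ : Measure α}

lemma gibbs {p q : α → ℝ} (hpm : Measurable p) (hqm : Measurable q)
    (hp0 : ∀ x, 0 ≤ p x) (hq0 : ∀ x, 0 ≤ q x) (hpq : ∀ x, 0 < p x → 0 < q x)
    (hpi : Integrable p μ) (hqi : Integrable q μ)
    (hp1 : ∫ x, p x ∂μ = 1) (hq1 : ∫ x, q x ∂μ = 1)
    (hφ : Integrable (fun x => p x * Real.log (p x / q x)) μ) :
    0 ≤ ∫ x, p x * Real.log (p x / q x) ∂μ ∧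
      ((∫ x, p x * Real.log (p x / q x) ∂μ = 0) ↔ ∀ᵐ x ∂μ, 0 < p x → q x = p x) := by
  set φ : α → ℝ := fun x => p x * Real.log (p x / q x) with hφdef
  set ψ : α → ℝ := fun x => φ x - (p x - q x) with hψdef
  have hψ0 : ∀ x, 0 ≤ ψ x := fun x => by
    have := key_ineq (hp0 x) (hq0 x) (hpq x)
    simp only [hψdef, hφdef]
    linarith
  have hψi : Integrable ψ μ := hφ.sub (hpi.sub hqi)
  have hψint : ∫ x, ψ x ∂μ = ∫ x, φ x ∂μ := by
    rw [show (∫ x, ψ x ∂μ) = ∫ x, φ x ∂μ - ∫ x, (p x - q x) ∂μ from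
      integral_sub hφ (hpi.sub hqi), integral_sub hpi hqi, hp1, hq1]
    ring
  have hψnn : 0 ≤ ∫ x, ψ x ∂μ := integral_nonneg hψ0
  constructor
  · linarith
  constructor
  · intro h0
    have : ∫ x, ψ x ∂μ = 0 := by rw [hψint, h0]
    have hae : ψ =ᵐ[μ] 0 :=
      (integral_eq_zero_iff_of_nonneg hψ0 hψi).mp this
    filter_upwards [hae] with x hx hxp
    have : φ x = p x - q x := by
      simp only [hψdef, Pi.zero_apply] at hx
      linarith
    exact key_eq hxp (hpq x hxp) this
  · intro hae
    have : φ =ᵐ[μ] 0 := by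
      filter_upwards [hae] with x hx
      rcases (hp0 x).eq_or_lt with h | h
      · simp [hφdef, ← h]
      · simp [hφdef, hx h, div_self (ne_of_gt h)]
    rw [integral_congr_ae this]
    simp

end Gibbs

section Side

variable {α β : Type*} [MeasurableSpace α] [MeasurableSpace β]
  {μ : Measure α} {ν : Measure β} [SigmaFinite μ] [SigmaFinite ν]
  {f : α × β → ℝ} {f₁ : α → ℝ}

lemma marg_meas (hfm : Measurable f) (hf₁ : ∀ a, f₁ a = ∫ b, f (a, b) ∂ν) :
    Measurable f₁ := by
  have h : f₁ = fun a => ∫ b, f (a, b) ∂ν := funext hf₁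
  rw [h]
  exact (hfm.stronglyMeasurable.integral_prod_right').measurable

lemma marg_int (hfi : Integrable f (μ.prod ν)) (hf₁ : ∀ a, f₁ a = ∫ b, f (a, b) ∂ν) :
    Integrable f₁ μ ∧ ∫ a, f₁ a ∂μ = ∫ x, f x ∂(μ.prod ν) := by
  have h : f₁ = fun a => ∫ b, f (a, b) ∂ν := funext hf₁
  constructor
  · rw [h]; exact hfi.integral_prod_left
  · rw [h]; exact integral_integral (f := fun a b => f (a, b)) hfi

lemma marg_pos (hfm : Measurable f) (hf0 : ∀ x, 0 ≤ f x) (hfi : Integrable f (μ.prod ν))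
    (hf₁ : ∀ a, f₁ a = ∫ b, f (a, b) ∂ν) :
    ∀ᵐ x ∂(μ.prod ν), 0 < f x → 0 < f₁ x.1 := by
  have hf₁m : Measurable f₁ := marg_meas hfm hf₁
  have hf₁0 : ∀ a, 0 ≤ f₁ a := fun a => (hf₁ a) ▸ integral_nonneg fun b => hf0 _
  have hS : MeasurableSet {a | f₁ a = 0} := hf₁m (measurableSet_singleton 0)
  set G : α × β → ℝ≥0∞ :=
    fun x => ({a | f₁ a = 0}.indicator (fun _ => (1 : ℝ≥0∞)) x.1) * ENNReal.ofReal (f x) with hG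
  have hGm : Measurable G :=
    ((measurable_const.indicator hS).comp measurable_fst).mul hfm.ennreal_ofReal
  have hslice : ∀ᵐ a ∂μ, ∫⁻ b, ENNReal.ofReal (f (a, b)) ∂ν = ENNReal.ofReal (f₁ a) := by
    filter_upwards [hfi.prod_right_ae] with a ha
    rw [hf₁, ofReal_integral_eq_lintegral_ofReal ha
      (Filter.Eventually.of_forall fun b => hf0 _)]
  have hG0 : ∫⁻ x, G x ∂(μ.prod ν) = 0 := by
    rw [lintegral_prod _ hGm.aemeasurable]
    have h : ∀ᵐ a ∂μ, (∫⁻ b, G (a, b) ∂ν) = 0 := by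
      filter_upwards [hslice] with a ha
      simp only [hG]
      rw [lintegral_const_mul _ (show Measurable fun b => ENNReal.ofReal (f (a, b)) from
        (hfm.comp measurable_prodMk_left).ennreal_ofReal), ha]
      by_cases h : f₁ a = 0
      · simp [Set.indicator, h]
      · simp [Set.indicator, h]
    rw [lintegral_congr_ae h]
    simp
  have hae : ∀ᵐ x ∂(μ.prod ν), G x = 0 := by
    have := (lintegral_eq_zero_iff hGm).mp hG0
    filter_upwards [this] with x hx
    exact hx
  filter_upwards [hae] with x hx hfx
  have h2 : ENNReal.ofReal (f x) ≠ 0 := by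
    simp only [ne_eq, ENNReal.ofReal_eq_zero, not_le]
    exact hfx
  have h3 : ({a | f₁ a = 0}.indicator (fun _ => (1 : ℝ≥0∞)) x.1) = 0 := by
    rcases mul_eq_zero.mp hx with h | h
    · exact h
    · exact absurd h h2
  have h4 : f₁ x.1 ≠ 0 := by
    intro h
    rw [Set.indicator_of_mem (by exact h : x.1 ∈ {a | f₁ a = 0})] at h3
    exact one_ne_zero h3
  exact lt_of_le_of_ne (hf₁0 x.1) (Ne.symm h4)

lemma u_int (hfm : Measurable f) (hf0 : ∀ x, 0 ≤ f x) (hfi : Integrable f (μ.prod ν))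
    (hf₁ : ∀ a, f₁ a = ∫ b, f (a, b) ∂ν)
    {h₁ : α → ℝ} (hh₁m : Measurable h₁) (hh₁0 : ∀ a, 0 ≤ h₁ a) (hh₁i : Integrable h₁ μ) :
    Integrable (fun x : α × β => f x * (h₁ x.1 / f₁ x.1)) (μ.prod ν) := by
  have hf₁m : Measurable f₁ := marg_meas hfm hf₁
  have hf₁0 : ∀ a, 0 ≤ f₁ a := fun a => (hf₁ a) ▸ integral_nonneg fun b => hf0 _
  have hum : Measurable fun x : α × β => f x * (h₁ x.1 / f₁ x.1) :=
    hfm.mul ((hh₁m.comp measurable_fst).div (hf₁m.comp measurable_fst))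
  have hu0 : ∀ x : α × β, 0 ≤ f x * (h₁ x.1 / f₁ x.1) := fun x =>
    mul_nonneg (hf0 x) (div_nonneg (hh₁0 _) (hf₁0 _))
  have hslice : ∀ᵐ a ∂μ, ∫⁻ b, ENNReal.ofReal (f (a, b)) ∂ν = ENNReal.ofReal (f₁ a) := by
    filter_upwards [hfi.prod_right_ae] with a ha
    rw [hf₁, ofReal_integral_eq_lintegral_ofReal ha
      (Filter.Eventually.of_forall fun b => hf0 _)]
  refine ⟨hum.aestronglyMeasurable, ?_⟩
  rw [hasFiniteIntegral_iff_ofReal (Filter.Eventually.of_forall hu0)]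
  have step1 : ∫⁻ x, ENNReal.ofReal (f x * (h₁ x.1 / f₁ x.1)) ∂(μ.prod ν)
      = ∫⁻ a, ∫⁻ b, ENNReal.ofReal (f (a, b) * (h₁ a / f₁ a)) ∂ν ∂μ :=
    lintegral_prod _ hum.ennreal_ofReal.aemeasurable
  have step2 : (∫⁻ a, ∫⁻ b, ENNReal.ofReal (f (a, b) * (h₁ a / f₁ a)) ∂ν ∂μ)
      = ∫⁻ a, ENNReal.ofReal (h₁ a / f₁ a * f₁ a) ∂μ := by
    apply lintegral_congr_ae
    filter_upwards [hslice] with a ha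
    simp_rw [ENNReal.ofReal_mul (hf0 _)]
    rw [lintegral_mul_const _ (show Measurable fun b => ENNReal.ofReal (f (a, b)) from
      (hfm.comp measurable_prodMk_left).ennreal_ofReal), ha,
      ← ENNReal.ofReal_mul (hf₁0 _), mul_comm (f₁ a)]
  have step3 : (∫⁻ a, ENNReal.ofReal (h₁ a / f₁ a * f₁ a) ∂μ)
      ≤ ∫⁻ a, ENNReal.ofReal (h₁ a) ∂μ := by
    apply lintegral_mono
    intro a
    apply ENNReal.ofReal_le_ofReal
    rcases eq_or_ne (f₁ a) 0 with h | h
    · rw [h]; simp [hh₁0 a]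
    · rw [div_mul_cancel₀ _ h]
  have step4 : (∫⁻ a, ENNReal.ofReal (h₁ a) ∂μ) < ⊤ :=
    (hasFiniteIntegral_iff_ofReal (Filter.Eventually.of_forall hh₁0)).mp hh₁i.hasFiniteIntegral
  rw [step1, step2]
  exact lt_of_le_of_lt step3 step4

lemma marg_integral (hfi : Integrable f (μ.prod ν)) (hf₁ : ∀ a, f₁ a = ∫ b, f (a, b) ∂ν)
    {L : α → ℝ} (hgi : Integrable (fun x : α × β => f x * L x.1) (μ.prod ν)) :
    Integrable (fun a => f₁ a * L a) μ ∧
      (∫ x, f x * L x.1 ∂(μ.prod ν)) = ∫ a, f₁ a * L a ∂μ := by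
  have h1 : ∀ a, (∫ b, f (a, b) * L a ∂ν) = f₁ a * L a := fun a => by
    rw [integral_mul_const, hf₁]
  constructor
  · exact (hgi.integral_prod_left).congr (Filter.Eventually.of_forall h1)
  · calc (∫ x : α × β, f x * L x.1 ∂(μ.prod ν))
        = ∫ a, ∫ b, f (a, b) * L a ∂ν ∂μ :=
          (integral_integral (f := fun a b => f (a, b) * L a) hgi).symm
      _ = ∫ a, f₁ a * L a ∂μ := integral_congr_ae (Filter.Eventually.of_forall h1)

end Side

lemma neg_bound {c p q : ℝ} (hc : 0 ≤ c) (hp : 0 < c → 0 < p) (hq : 0 < c → 0 < q) :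
    -(c * Real.log (p / q)) ≤ c * (q / p) := by
  rcases hc.eq_or_lt with h | h
  · simp [← h]
  · have hp' := hp h
    have hq' := hq h
    have h1 : Real.log (q / p) ≤ q / p - 1 := Real.log_le_sub_one_of_pos (div_pos hq' hp')
    have h2 : Real.log (p / q) = - Real.log (q / p) := by
      rw [← Real.log_inv]; congr 1; rw [inv_div]
    rw [h2, mul_neg, neg_neg]
    nlinarith [mul_le_mul_of_nonneg_left h1 (le_of_lt h)]
/-- in the setting of Theorem 1, with `KL(f ‖ f₁⊗f₂)` finite (here: both KL
integrands integrable), equality `KL(f ‖ h₁⊗h₂) = KL(f ‖ f₁⊗f₂)` holds if and only if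
`h₁ = f₁` a.e. on `{f₁ > 0}` and `h₂ = f₂` a.e. on `{f₂ > 0}`. -/
theorem stmt_4 {n₁ n₂ : ℕ}
    (f : (Fin n₁ → ℝ) × (Fin n₂ → ℝ) → ℝ)
    (f₁ : (Fin n₁ → ℝ) → ℝ) (f₂ : (Fin n₂ → ℝ) → ℝ)
    (h₁ : (Fin n₁ → ℝ) → ℝ) (h₂ : (Fin n₂ → ℝ) → ℝ)
    (hf_meas : Measurable f) (hh₁_meas : Measurable h₁) (hh₂_meas : Measurable h₂)
    (hf_nonneg : ∀ x, 0 ≤ f x) (hh₁_nonneg : ∀ x₁, 0 ≤ h₁ x₁) (hh₂_nonneg : ∀ x₂, 0 ≤ h₂ x₂)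
    (hf_prob : ∫ x, f x = 1) (hh₁_prob : ∫ x₁, h₁ x₁ = 1) (hh₂_prob : ∫ x₂, h₂ x₂ = 1)
    (hf₁ : ∀ x₁, f₁ x₁ = ∫ x₂, f (x₁, x₂))
    (hf₂ : ∀ x₂, f₂ x₂ = ∫ x₁, f (x₁, x₂))
    (hpos : ∀ x : (Fin n₁ → ℝ) × (Fin n₂ → ℝ), 0 < f x → 0 < h₁ x.1 * h₂ x.2)
    (hint_h : Integrable (fun x => f x * Real.log (f x / (h₁ x.1 * h₂ x.2))))
    (hint_f : Integrable (fun x => f x * Real.log (f x / (f₁ x.1 * f₂ x.2)))) :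
    (∫ x, f x * Real.log (f x / (h₁ x.1 * h₂ x.2))
        = ∫ x, f x * Real.log (f x / (f₁ x.1 * f₂ x.2)))
      ↔ ((∀ᵐ x₁, 0 < f₁ x₁ → h₁ x₁ = f₁ x₁) ∧ (∀ᵐ x₂, 0 < f₂ x₂ → h₂ x₂ = f₂ x₂)) := by
  have hvol : (volume : Measure ((Fin n₁ → ℝ) × (Fin n₂ → ℝ)))
      = (volume : Measure (Fin n₁ → ℝ)).prod (volume : Measure (Fin n₂ → ℝ)) :=
    MeasureTheory.Measure.volume_eq_prod _ _
  rw [hvol] at hint_h hint_f hf_prob ⊢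
  -- basic integrability
  have hf_int : Integrable f ((volume : Measure (Fin n₁ → ℝ)).prod volume) := by
    by_contra h
    rw [integral_undef h] at hf_prob; norm_num at hf_prob
  have hh₁_int : Integrable h₁ (volume : Measure (Fin n₁ → ℝ)) := by
    by_contra h
    rw [integral_undef h] at hh₁_prob; norm_num at hh₁_prob
  have hh₂_int : Integrable h₂ (volume : Measure (Fin n₂ → ℝ)) := by
    by_contra h
    rw [integral_undef h] at hh₂_prob; norm_num at hh₂_prob
  -- the swapped function
  set F : (Fin n₂ → ℝ) × (Fin n₁ → ℝ) → ℝ := fun y => f (y.2, y.1) with hF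
  have hF_meas : Measurable F := hf_meas.comp measurable_swap
  have hF0 : ∀ y, 0 ≤ F y := fun y => hf_nonneg _
  have hF_int : Integrable F ((volume : Measure (Fin n₂ → ℝ)).prod volume) := hf_int.swap
  have hf₂' : ∀ b, f₂ b = ∫ a, F (b, a) := fun b => hf₂ b
  -- nonnegativity of the marginals
  have hf₁0 : ∀ a, 0 ≤ f₁ a := fun a => (hf₁ a) ▸ integral_nonneg fun b => hf_nonneg _
  have hf₂0 : ∀ b, 0 ≤ f₂ b := fun b => (hf₂ b) ▸ integral_nonneg fun a => hf_nonneg _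
  -- strict positivity of h where the marginal is positive
  have hpos₁ : ∀ a, 0 < f₁ a → 0 < h₁ a := by
    intro a ha
    rcases (hh₁_nonneg a).lt_or_eq with h | h
    · exact h
    · exfalso
      have hb : ∃ b, 0 < f (a, b) := by
        by_contra hb
        push_neg at hb
        have hz : ∀ b, f (a, b) = 0 := fun b => le_antisymm (hb b) (hf_nonneg _)
        rw [hf₁ a] at ha
        simp only [hz, integral_zero] at ha
        exact lt_irrefl 0 ha
      obtain ⟨b, hb⟩ := hb
      have h2 := hpos (a, b) hb
      rw [← h, zero_mul] at h2
      exact lt_irrefl 0 h2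
  have hpos₂ : ∀ b, 0 < f₂ b → 0 < h₂ b := by
    intro b hb
    rcases (hh₂_nonneg b).lt_or_eq with h | h
    · exact h
    · exfalso
      have ha : ∃ a, 0 < f (a, b) := by
        by_contra ha
        push_neg at ha
        have hz : ∀ a, f (a, b) = 0 := fun a => le_antisymm (ha a) (hf_nonneg _)
        rw [hf₂ b] at hb
        simp only [hz, integral_zero] at hb
        exact lt_irrefl 0 hb
      obtain ⟨a, ha⟩ := ha
      have h2 := hpos (a, b) ha
      rw [← h, mul_zero] at h2
      exact lt_irrefl 0 h2
  -- a.e. positivity of the marginals where f is positive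
  have hm₁ : ∀ᵐ x ∂((volume : Measure (Fin n₁ → ℝ)).prod volume), 0 < f x → 0 < f₁ x.1 :=
    marg_pos hf_meas hf_nonneg hf_int hf₁
  have hm₂ : ∀ᵐ x ∂((volume : Measure (Fin n₁ → ℝ)).prod volume), 0 < f x → 0 < f₂ x.2 := by
    have h' := marg_pos hF_meas hF0 hF_int hf₂'
    rw [← MeasureTheory.Measure.measurePreserving_swap.map_eq] at h'
    have h'' := ae_of_ae_map measurable_swap.aemeasurable h'
    filter_upwards [h''] with x hx
    exact hx
  -- integrability of the comparison functions
  have hu₁ : Integrable (fun x : (Fin n₁ → ℝ) × (Fin n₂ → ℝ) => f x * (h₁ x.1 / f₁ x.1))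
      ((volume : Measure (Fin n₁ → ℝ)).prod volume) :=
    u_int hf_meas hf_nonneg hf_int hf₁ hh₁_meas hh₁_nonneg hh₁_int
  have hu₂ : Integrable (fun x : (Fin n₁ → ℝ) × (Fin n₂ → ℝ) => f x * (h₂ x.2 / f₂ x.2))
      ((volume : Measure (Fin n₁ → ℝ)).prod volume) :=
    (u_int hF_meas hF0 hF_int hf₂' hh₂_meas hh₂_nonneg hh₂_int).swap
  have hu₁0 : ∀ x : (Fin n₁ → ℝ) × (Fin n₂ → ℝ), 0 ≤ f x * (h₁ x.1 / f₁ x.1) := fun x =>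
    mul_nonneg (hf_nonneg x) (div_nonneg (hh₁_nonneg _) (hf₁0 _))
  have hu₂0 : ∀ x : (Fin n₁ → ℝ) × (Fin n₂ → ℝ), 0 ≤ f x * (h₂ x.2 / f₂ x.2) := fun x =>
    mul_nonneg (hf_nonneg x) (div_nonneg (hh₂_nonneg _) (hf₂0 _))
  -- decomposition of the difference of integrands
  have hdecomp : (fun x => f x * Real.log (f x / (h₁ x.1 * h₂ x.2))
        - f x * Real.log (f x / (f₁ x.1 * f₂ x.2)))
      =ᵐ[(volume : Measure (Fin n₁ → ℝ)).prod volume]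
      (fun x => f x * Real.log (f₁ x.1 / h₁ x.1) + f x * Real.log (f₂ x.2 / h₂ x.2)) := by
    filter_upwards [hm₁, hm₂] with x hx1 hx2
    rcases (hf_nonneg x).lt_or_eq with hfx | hfx
    · have hf₁p := hx1 hfx
      have hf₂p := hx2 hfx
      have hh₁p := hpos₁ _ hf₁p
      have hh₂p := hpos₂ _ hf₂p
      rw [Real.log_div (ne_of_gt hfx) (by positivity),
          Real.log_div (ne_of_gt hfx) (by positivity),
          Real.log_mul (ne_of_gt hh₁p) (ne_of_gt hh₂p),
          Real.log_mul (ne_of_gt hf₁p) (ne_of_gt hf₂p),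
          Real.log_div (ne_of_gt hf₁p) (ne_of_gt hh₁p),
          Real.log_div (ne_of_gt hf₂p) (ne_of_gt hh₂p)]
      ring
    · have hfx' : f x = 0 := hfx.symm
      simp [hfx']
  have hmi : Integrable (fun x => f x * Real.log (f x / (h₁ x.1 * h₂ x.2))
        - f x * Real.log (f x / (f₁ x.1 * f₂ x.2)))
      ((volume : Measure (Fin n₁ → ℝ)).prod volume) := hint_h.sub hint_f
  -- measurability of marginals
  have hf₁m : Measurable f₁ := marg_meas hf_meas hf₁
  have hf₂m : Measurable f₂ := marg_meas hF_meas hf₂'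
  -- integrability of the two log pieces
  have hg₁i : Integrable (fun x => f x * Real.log (f₁ x.1 / h₁ x.1))
      ((volume : Measure (Fin n₁ → ℝ)).prod volume) := by
    have hmeas : Measurable fun x : (Fin n₁ → ℝ) × (Fin n₂ → ℝ) =>
        f x * Real.log (f₁ x.1 / h₁ x.1) :=
      hf_meas.mul (Real.measurable_log.comp
        ((hf₁m.comp measurable_fst).div (hh₁_meas.comp measurable_fst)))
    apply Integrable.mono' ((hmi.abs.add hu₁).add hu₂) hmeas.aestronglyMeasurable
    filter_upwards [hdecomp, hm₁, hm₂] with x hdx hx1 hx2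
    have n1 : -(f x * Real.log (f₁ x.1 / h₁ x.1)) ≤ f x * (h₁ x.1 / f₁ x.1) :=
      neg_bound (hf_nonneg x) hx1 (fun h => hpos₁ _ (hx1 h))
    have n2 : -(f x * Real.log (f₂ x.2 / h₂ x.2)) ≤ f x * (h₂ x.2 / f₂ x.2) :=
      neg_bound (hf_nonneg x) hx2 (fun h => hpos₂ _ (hx2 h))
    simp only [Pi.add_apply]
    rw [Real.norm_eq_abs, abs_le]
    constructor
    · have := hu₂0 x
      linarith [abs_nonneg (f x * Real.log (f x / (h₁ x.1 * h₂ x.2))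
        - f x * Real.log (f x / (f₁ x.1 * f₂ x.2)))]
    · have hle := le_abs_self (f x * Real.log (f x / (h₁ x.1 * h₂ x.2))
        - f x * Real.log (f x / (f₁ x.1 * f₂ x.2)))
      have := hu₁0 x
      linarith
  have hg₂i : Integrable (fun x => f x * Real.log (f₂ x.2 / h₂ x.2))
      ((volume : Measure (Fin n₁ → ℝ)).prod volume) := by
    have hmeas : Measurable fun x : (Fin n₁ → ℝ) × (Fin n₂ → ℝ) =>
        f x * Real.log (f₂ x.2 / h₂ x.2) :=
      hf_meas.mul (Real.measurable_log.comp
        ((hf₂m.comp measurable_snd).div (hh₂_meas.comp measurable_snd)))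
    apply Integrable.mono' ((hmi.abs.add hu₁).add hu₂) hmeas.aestronglyMeasurable
    filter_upwards [hdecomp, hm₁, hm₂] with x hdx hx1 hx2
    have n1 : -(f x * Real.log (f₁ x.1 / h₁ x.1)) ≤ f x * (h₁ x.1 / f₁ x.1) :=
      neg_bound (hf_nonneg x) hx1 (fun h => hpos₁ _ (hx1 h))
    have n2 : -(f x * Real.log (f₂ x.2 / h₂ x.2)) ≤ f x * (h₂ x.2 / f₂ x.2) :=
      neg_bound (hf_nonneg x) hx2 (fun h => hpos₂ _ (hx2 h))
    simp only [Pi.add_apply]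
    rw [Real.norm_eq_abs, abs_le]
    constructor
    · have := hu₁0 x
      linarith [abs_nonneg (f x * Real.log (f x / (h₁ x.1 * h₂ x.2))
        - f x * Real.log (f x / (f₁ x.1 * f₂ x.2)))]
    · have hle := le_abs_self (f x * Real.log (f x / (h₁ x.1 * h₂ x.2))
        - f x * Real.log (f x / (f₁ x.1 * f₂ x.2)))
      have := hu₂0 x
      linarith
  -- reduction to the marginal integrals
  have hmarg₁ := marg_integral hf_int hf₁ (L := fun a => Real.log (f₁ a / h₁ a)) hg₁i
  have hφ₁i : Integrable (fun a => f₁ a * Real.log (f₁ a / h₁ a))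
      (volume : Measure (Fin n₁ → ℝ)) := hmarg₁.1
  have hK₁ : (∫ x, f x * Real.log (f₁ x.1 / h₁ x.1)
        ∂((volume : Measure (Fin n₁ → ℝ)).prod volume))
      = ∫ a, f₁ a * Real.log (f₁ a / h₁ a) := hmarg₁.2
  have hg₂swap : Integrable (fun y => F y * Real.log (f₂ y.1 / h₂ y.1))
      ((volume : Measure (Fin n₂ → ℝ)).prod volume) := hg₂i.swap
  have hmarg₂ := marg_integral hF_int hf₂' (L := fun b => Real.log (f₂ b / h₂ b)) hg₂swap
  have hφ₂i : Integrable (fun b => f₂ b * Real.log (f₂ b / h₂ b))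
      (volume : Measure (Fin n₂ → ℝ)) := hmarg₂.1
  have hK₂ : (∫ x, f x * Real.log (f₂ x.2 / h₂ x.2)
        ∂((volume : Measure (Fin n₁ → ℝ)).prod volume))
      = ∫ b, f₂ b * Real.log (f₂ b / h₂ b) := by
    rw [← hmarg₂.2]
    exact integral_prod_swap (fun y => F y * Real.log (f₂ y.1 / h₂ y.1))
  -- marginal probabilities
  have hmint₁ := marg_int hf_int hf₁
  have hf₁_int : Integrable f₁ (volume : Measure (Fin n₁ → ℝ)) := hmint₁.1
  have hf₁_prob : ∫ a, f₁ a = 1 := by rw [hmint₁.2, hf_prob]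
  have hmint₂ := marg_int hF_int hf₂'
  have hf₂_int : Integrable f₂ (volume : Measure (Fin n₂ → ℝ)) := hmint₂.1
  have hF_prob : (∫ y, F y ∂((volume : Measure (Fin n₂ → ℝ)).prod volume)) = 1 := by
    rw [← integral_prod_swap F]; exact hf_prob
  have hf₂_prob : ∫ b, f₂ b = 1 := by rw [hmint₂.2]; exact hF_prob
  -- Gibbs' inequality for the marginals
  obtain ⟨hK₁nn, hK₁iff⟩ := gibbs hf₁m hh₁_meas hf₁0 hh₁_nonneg hpos₁ hf₁_int hh₁_int
    hf₁_prob hh₁_prob hφ₁i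
  obtain ⟨hK₂nn, hK₂iff⟩ := gibbs hf₂m hh₂_meas hf₂0 hh₂_nonneg hpos₂ hf₂_int hh₂_int
    hf₂_prob hh₂_prob hφ₂i
  -- assemble
  have hsub : (∫ x, f x * Real.log (f x / (h₁ x.1 * h₂ x.2))
        ∂((volume : Measure (Fin n₁ → ℝ)).prod volume))
      - (∫ x, f x * Real.log (f x / (f₁ x.1 * f₂ x.2))
        ∂((volume : Measure (Fin n₁ → ℝ)).prod volume))
      = (∫ a, f₁ a * Real.log (f₁ a / h₁ a)) + ∫ b, f₂ b * Real.log (f₂ b / h₂ b) := by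
    rw [← integral_sub hint_h hint_f, integral_congr_ae hdecomp,
      integral_add hg₁i hg₂i, hK₁, hK₂]
  constructor
  · intro h
    have h0 : (∫ a, f₁ a * Real.log (f₁ a / h₁ a))
        + (∫ b, f₂ b * Real.log (f₂ b / h₂ b)) = 0 := by
      rw [← hsub, h]; ring
    have e1 : (∫ a, f₁ a * Real.log (f₁ a / h₁ a)) = 0 := by linarith
    have e2 : (∫ b, f₂ b * Real.log (f₂ b / h₂ b)) = 0 := by linarith
    exact ⟨hK₁iff.mp e1, hK₂iff.mp e2⟩
  · rintro ⟨ha1, ha2⟩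
    have e1 := hK₁iff.mpr ha1
    have e2 := hK₂iff.mpr ha2
    have : (∫ x, f x * Real.log (f x / (h₁ x.1 * h₂ x.2))
          ∂((volume : Measure (Fin n₁ → ℝ)).prod volume))
        - (∫ x, f x * Real.log (f x / (f₁ x.1 * f₂ x.2))
          ∂((volume : Measure (Fin n₁ → ℝ)).prod volume)) = 0 := by
      rw [hsub, e1, e2]; ring
    linarith
end

section
/- In a hidden Markov model, the joint smoothing density factorizes as p(x_{j:l} | y_{0:T}) ∝ p(x_j | y_{0:j}) · (p(x_l | y_{0:T}) / p(x_l | y_{0:l})) · ∏_{i=j}^{l-1} p(x_{i+1} | x_i) p(y_{i+1} | x_{i+1}) as a function of x_{j:l}, for 0 ≤ j < l ≤ T (assuming all conditional densities exist and p(x_l | y_{0:l}) > 0). -/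
open Finset
set_option linter.unreachableTactic false
set_option linter.unusedTactic false
set_option linter.unusedSectionVars false
set_option maxHeartbeats 1000000

variable {S O : Type*} [Fintype S] [DecidableEq S]

/-- Joint density of the hidden path `x₀,…,x_t` together with the observations `y₀,…,y_t`
in a hidden Markov model with initial density `p0`, transition densities `tr` and emission
densities `em`. -/
def hmmJoint (p0 : S → ℝ) (tr : S → S → ℝ) (em : S → O → ℝ) (y : ℕ → O)
    (t : ℕ) (x : Fin (t + 1) → S) : ℝ :=
  p0 (x 0) * em (x 0) (y 0) *
    ∏ i : Fin t, (tr (x i.castSucc) (x i.succ) * em (x i.succ) (y (i + 1)))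

/-- Likelihood (normalising constant) of the observations `y₀,…,y_t`. -/
noncomputable def hmmZ (p0 : S → ℝ) (tr : S → S → ℝ) (em : S → O → ℝ) (y : ℕ → O)
    (t : ℕ) : ℝ :=
  ∑ x : Fin (t + 1) → S, hmmJoint p0 tr em y t x

/-- Filtering density `p(x_t = s | y_{0:t})`. -/
noncomputable def hmmFilter (p0 : S → ℝ) (tr : S → S → ℝ) (em : S → O → ℝ) (y : ℕ → O)
    (t : ℕ) (s : S) : ℝ :=
  (∑ x : Fin (t + 1) → S, if x (Fin.last t) = s then hmmJoint p0 tr em y t x else 0) /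
    hmmZ p0 tr em y t

/-- Marginal smoothing density `p(x_t = s | y_{0:T})`. -/
noncomputable def hmmMarginal (p0 : S → ℝ) (tr : S → S → ℝ) (em : S → O → ℝ) (y : ℕ → O)
    (T t : ℕ) (ht : t < T + 1) (s : S) : ℝ :=
  (∑ x : Fin (T + 1) → S, if x ⟨t, ht⟩ = s then hmmJoint p0 tr em y T x else 0) /
    hmmZ p0 tr em y T

/-- Conditional density `p(x_{j:l} = z_{j:l} | y_{0:T})` of the block `X_{j:l}` given the
observations `y₀,…,y_T`. -/
noncomputable def hmmCondBlock (p0 : S → ℝ) (tr : S → S → ℝ) (em : S → O → ℝ) (y : ℕ → O)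
    (T j l : ℕ) (z : ℕ → S) : ℝ :=
  (∑ x : Fin (T + 1) → S,
      if ∀ i : Fin (T + 1), j ≤ (i : ℕ) ∧ (i : ℕ) ≤ l → x i = z (i : ℕ)
        then hmmJoint p0 tr em y T x else 0) /
    hmmZ p0 tr em y T

def snocEquiv' (S : Type*) (n : ℕ) : (Fin (n + 1) → S) ≃ (Fin n → S) × S where
  toFun x := (Fin.init x, x (Fin.last n))
  invFun p := Fin.snoc p.1 p.2
  left_inv x := Fin.snoc_init_self x
  right_inv p := by simp [Fin.init_snoc, Fin.snoc_last]

lemma sum_snoc {n : ℕ} (f : (Fin (n + 1) → S) → ℝ) :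
    ∑ x : Fin (n + 1) → S, f x = ∑ x : Fin n → S, ∑ s : S, f (Fin.snoc x s) := by
  calc ∑ x : Fin (n + 1) → S, f x
      = ∑ p : (Fin n → S) × S, f (Fin.snoc p.1 p.2) :=
        Fintype.sum_equiv (snocEquiv' S n) _ _
          (fun x => by simp [snocEquiv', Fin.snoc_init_self])
    _ = _ := Fintype.sum_prod_type (fun p => f (Fin.snoc p.1 p.2))

lemma snoc_mk_lt {n : ℕ} (x : Fin (n + 1) → S) (s : S) (m : ℕ) (h : m < n + 1) (h2 : m < n + 2) :
    (Fin.snoc x s : Fin (n + 2) → S) ⟨m, h2⟩ = x ⟨m, h⟩ := by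
  have : (⟨m, h2⟩ : Fin (n + 2)) = Fin.castSucc ⟨m, h⟩ := rfl
  rw [this, Fin.snoc_castSucc]

lemma joint_snoc (p0 : S → ℝ) (tr : S → S → ℝ) (em : S → O → ℝ) (y : ℕ → O) (t : ℕ)
    (x : Fin (t + 1) → S) (s : S) :
    hmmJoint p0 tr em y (t + 1) (Fin.snoc x s) =
      hmmJoint p0 tr em y t x * (tr (x (Fin.last t)) s * em s (y (t + 1))) := by
  unfold hmmJoint
  rw [Fin.prod_univ_castSucc]
  have h0 : (Fin.snoc x s : Fin (t + 2) → S) 0 = x 0 := by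
    rw [show (0 : Fin (t + 2)) = Fin.castSucc 0 from rfl, Fin.snoc_castSucc]
  simp only [h0, Fin.snoc_castSucc, Fin.succ_castSucc, Fin.succ_last, Fin.snoc_last,
    Fin.coe_castSucc, Fin.val_last]
  ring

/-- Forward (filter numerator) at time `t`. -/
noncomputable def Anum (p0 : S → ℝ) (tr : S → S → ℝ) (em : S → O → ℝ) (y : ℕ → O)
    (t : ℕ) (s : S) : ℝ :=
  ∑ x : Fin (t + 1) → S, if x (Fin.last t) = s then hmmJoint p0 tr em y t x else 0

/-- Transition-block sum over paths of length `k` starting at time `m` in state `s`,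
ending in state `s'`. -/
noncomputable def trC (tr : S → S → ℝ) (em : S → O → ℝ) (y : ℕ → O) :
    ℕ → ℕ → S → S → ℝ
  | 0, _, s, s' => if s' = s then 1 else 0
  | (k + 1), m, s, s' =>
      ∑ s'' : S, trC tr em y k m s s'' * (tr s'' s' * em s' (y (m + k + 1)))

/-- Partition any sum over paths by the value of the last coordinate. -/
lemma sum_partition_last {n : ℕ} (f : (Fin (n + 1) → S) → ℝ) :
    ∑ x : Fin (n + 1) → S, f x
      = ∑ s : S, ∑ x : Fin (n + 1) → S, if x (Fin.last n) = s then f x else 0 := by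
  rw [Finset.sum_comm]
  refine Finset.sum_congr rfl fun x _ => ?_
  rw [Finset.sum_ite_eq (Finset.univ : Finset S) (x (Fin.last n)) (fun _ => f x)]
  simp

lemma two_pin_eq (p0 : S → ℝ) (tr : S → S → ℝ) (em : S → O → ℝ) (y : ℕ → O)
    (k m : ℕ) (s s' : S) :
    (∑ x : Fin (m + k + 1) → S,
        if x ⟨m, by omega⟩ = s ∧ x (Fin.last (m + k)) = s' then hmmJoint p0 tr em y (m + k) x else 0)
      = Anum p0 tr em y m s * trC tr em y k m s s' := by
  induction k generalizing s' with
  | zero =>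
      rw [trC, Anum]
      have hlast : (⟨m, by omega⟩ : Fin (m + 0 + 1)) = Fin.last (m + 0) := rfl
      simp only [hlast]
      by_cases h : s' = s
      · subst h
        rw [if_pos rfl, mul_one]
        refine Finset.sum_congr rfl fun x _ => ?_
        by_cases hx : x (Fin.last (m + 0)) = s' <;> simp [hx]
      · rw [if_neg h, mul_zero]
        refine Finset.sum_eq_zero fun x _ => ?_
        rw [if_neg]
        rintro ⟨h1, h2⟩
        exact h (by rw [← h2, h1])
  | succ k ih =>
      show (∑ x : Fin (m + k + 1 + 1) → S,
          if x ⟨m, by omega⟩ = s ∧ x (Fin.last (m + k + 1)) = s'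
            then hmmJoint p0 tr em y (m + k + 1) x else 0)
        = Anum p0 tr em y m s * trC tr em y (k + 1) m s s'
      rw [sum_snoc (n := m + k + 1)]
      have inner : ∀ x : Fin (m + k + 1) → S,
          (∑ s'' : S, if (Fin.snoc x s'' : Fin (m + k + 1 + 1) → S) ⟨m, by omega⟩ = s ∧
              (Fin.snoc x s'' : Fin (m + k + 1 + 1) → S) (Fin.last (m + k + 1)) = s'
            then hmmJoint p0 tr em y (m + k + 1) (Fin.snoc x s'') else 0)
          = if x ⟨m, by omega⟩ = s then
              hmmJoint p0 tr em y (m + k) x *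
                (tr (x (Fin.last (m + k))) s' * em s' (y (m + k + 1)))
            else 0 := by
        intro x
        have hm : ∀ s'' : S, (Fin.snoc x s'' : Fin (m + k + 1 + 1) → S) ⟨m, by omega⟩
            = x ⟨m, by omega⟩ := fun s'' => snoc_mk_lt x s'' m (by omega) (by omega)
        simp only [hm, Fin.snoc_last, joint_snoc]
        by_cases hA : x ⟨m, by omega⟩ = s <;> simp [hA, Finset.sum_ite_eq']
      calc (∑ x : Fin (m + k + 1) → S, ∑ s'' : S,
              if (Fin.snoc x s'' : Fin (m + k + 1 + 1) → S) ⟨m, by omega⟩ = s ∧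
                  (Fin.snoc x s'' : Fin (m + k + 1 + 1) → S) (Fin.last (m + k + 1)) = s'
                then hmmJoint p0 tr em y (m + k + 1) (Fin.snoc x s'') else 0)
          = ∑ x : Fin (m + k + 1) → S,
              if x ⟨m, by omega⟩ = s then
                hmmJoint p0 tr em y (m + k) x *
                  (tr (x (Fin.last (m + k))) s' * em s' (y (m + k + 1)))
              else 0 := Finset.sum_congr rfl fun x _ => inner x
        _ = Anum p0 tr em y m s * trC tr em y (k + 1) m s s' := by
            rw [sum_partition_last, trC, Finset.mul_sum]
            refine Finset.sum_congr rfl fun s3 _ => ?_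
            rw [← mul_assoc, ← ih s3, Finset.sum_mul]
            refine Finset.sum_congr rfl fun x _ => ?_
            by_cases h1 : x (Fin.last (m + k)) = s3 <;>
              by_cases h2 : x ⟨m, by omega⟩ = s <;> simp [h1, h2] <;> ring

lemma blk_snoc (j b n : ℕ) (hbn : b ≤ n) (x : Fin (n + 1) → S) (s'' : S) (z : ℕ → S) :
    (∀ i : Fin (n + 1 + 1), j ≤ (i : ℕ) ∧ (i : ℕ) ≤ b →
        (Fin.snoc x s'' : Fin (n + 1 + 1) → S) i = z (i : ℕ))
      ↔ (∀ i : Fin (n + 1), j ≤ (i : ℕ) ∧ (i : ℕ) ≤ b → x i = z (i : ℕ)) := by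
  constructor
  · intro h i hi
    have := h i.castSucc (by simpa using hi)
    simpa [Fin.snoc_castSucc] using this
  · rintro h i ⟨h1, h2⟩
    have hi : (i : ℕ) < n + 1 := by omega
    have hie : i = Fin.castSucc ⟨(i : ℕ), hi⟩ := Fin.ext rfl
    rw [hie, Fin.snoc_castSucc]
    exact h ⟨(i : ℕ), hi⟩ ⟨h1, h2⟩

lemma blockG (p0 : S → ℝ) (tr : S → S → ℝ) (em : S → O → ℝ) (y : ℕ → O)
    (j d : ℕ) (z : ℕ → S) :
    (∑ x : Fin (j + d + 1) → S,
        if ∀ i : Fin (j + d + 1), j ≤ (i : ℕ) ∧ (i : ℕ) ≤ j + d → x i = z (i : ℕ)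
          then hmmJoint p0 tr em y (j + d) x else 0)
      = Anum p0 tr em y j (z j) *
          ∏ i ∈ Finset.Ico j (j + d), (tr (z i) (z (i + 1)) * em (z (i + 1)) (y (i + 1))) := by
  induction d with
  | zero =>
      show (∑ x : Fin (j + 1) → S,
          if ∀ i : Fin (j + 1), j ≤ (i : ℕ) ∧ (i : ℕ) ≤ j → x i = z (i : ℕ)
            then hmmJoint p0 tr em y j x else 0)
        = Anum p0 tr em y j (z j) *
            ∏ i ∈ Finset.Ico j j, (tr (z i) (z (i + 1)) * em (z (i + 1)) (y (i + 1)))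
      rw [Finset.Ico_self, Finset.prod_empty, mul_one, Anum]
      refine Finset.sum_congr rfl fun x _ => ?_
      refine if_congr ?_ rfl rfl
      constructor
      · intro h
        simpa using h (Fin.last j) (by simp)
      · rintro h i ⟨h1, h2⟩
        have hij : (i : ℕ) = j := by omega
        have hie : i = Fin.last j := Fin.ext (by simpa using hij)
        rw [hie]
        simpa using h
  | succ d ih =>
      show (∑ x : Fin (j + d + 1 + 1) → S,
          if ∀ i : Fin (j + d + 1 + 1), j ≤ (i : ℕ) ∧ (i : ℕ) ≤ j + d + 1 → x i = z (i : ℕ)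
            then hmmJoint p0 tr em y (j + d + 1) x else 0)
        = Anum p0 tr em y j (z j) *
            ∏ i ∈ Finset.Ico j (j + d + 1), (tr (z i) (z (i + 1)) * em (z (i + 1)) (y (i + 1)))
      rw [sum_snoc (n := j + d + 1)]
      have hcond : ∀ (x : Fin (j + d + 1) → S) (s'' : S),
          (∀ i : Fin (j + d + 1 + 1), j ≤ (i : ℕ) ∧ (i : ℕ) ≤ j + d + 1 →
              (Fin.snoc x s'' : Fin (j + d + 1 + 1) → S) i = z (i : ℕ))
            ↔ ((∀ i : Fin (j + d + 1), j ≤ (i : ℕ) ∧ (i : ℕ) ≤ j + d → x i = z (i : ℕ))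
                ∧ s'' = z (j + d + 1)) := by
        intro x s''
        constructor
        · intro h
          refine ⟨fun i hi => ?_, ?_⟩
          · have := h i.castSucc (by simp; omega)
            simpa [Fin.snoc_castSucc] using this
          · have := h (Fin.last (j + d + 1)) (by simp; omega)
            simpa using this
        · rintro ⟨hb, hs⟩ i ⟨h1, h2⟩
          by_cases hi : (i : ℕ) ≤ j + d
          · have hlt : (i : ℕ) < j + d + 1 := by omega
            have hie : i = Fin.castSucc ⟨(i : ℕ), hlt⟩ := Fin.ext rfl
            rw [hie, Fin.snoc_castSucc]
            exact hb ⟨(i : ℕ), hlt⟩ ⟨h1, by omega⟩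
          · have hval : (i : ℕ) = j + d + 1 := by omega
            have hie : i = Fin.last (j + d + 1) := Fin.ext (by simpa using hval)
            rw [hie, Fin.snoc_last]
            simpa [hval] using hs
      have inner : ∀ x : Fin (j + d + 1) → S,
          (∑ s'' : S,
            if ∀ i : Fin (j + d + 1 + 1), j ≤ (i : ℕ) ∧ (i : ℕ) ≤ j + d + 1 →
                (Fin.snoc x s'' : Fin (j + d + 1 + 1) → S) i = z (i : ℕ)
              then hmmJoint p0 tr em y (j + d + 1) (Fin.snoc x s'') else 0)
          = (if ∀ i : Fin (j + d + 1), j ≤ (i : ℕ) ∧ (i : ℕ) ≤ j + d → x i = z (i : ℕ)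
              then hmmJoint p0 tr em y (j + d) x else 0) *
            (tr (z (j + d)) (z (j + d + 1)) * em (z (j + d + 1)) (y (j + d + 1))) := by
        intro x
        have hsum : ∀ s'' : S,
            (if ∀ i : Fin (j + d + 1 + 1), j ≤ (i : ℕ) ∧ (i : ℕ) ≤ j + d + 1 →
                (Fin.snoc x s'' : Fin (j + d + 1 + 1) → S) i = z (i : ℕ)
              then hmmJoint p0 tr em y (j + d + 1) (Fin.snoc x s'') else 0)
            = (if ((∀ i : Fin (j + d + 1), j ≤ (i : ℕ) ∧ (i : ℕ) ≤ j + d → x i = z (i : ℕ))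
                ∧ s'' = z (j + d + 1))
              then hmmJoint p0 tr em y (j + d) x *
                (tr (x (Fin.last (j + d))) s'' * em s'' (y (j + d + 1))) else 0) := by
          intro s''
          rw [joint_snoc]
          exact if_congr (hcond x s'') rfl rfl
        by_cases hb : ∀ i : Fin (j + d + 1), j ≤ (i : ℕ) ∧ (i : ℕ) ≤ j + d → x i = z (i : ℕ)
        · have hxl : x (Fin.last (j + d)) = z (j + d) := by
            simpa using hb (Fin.last (j + d)) (by simp)
          calc (∑ s'' : S,
                if ∀ i : Fin (j + d + 1 + 1), j ≤ (i : ℕ) ∧ (i : ℕ) ≤ j + d + 1 →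
                    (Fin.snoc x s'' : Fin (j + d + 1 + 1) → S) i = z (i : ℕ)
                  then hmmJoint p0 tr em y (j + d + 1) (Fin.snoc x s'') else 0)
              = ∑ s'' : S, (if s'' = z (j + d + 1)
                  then hmmJoint p0 tr em y (j + d) x *
                    (tr (x (Fin.last (j + d))) s'' * em s'' (y (j + d + 1))) else 0) :=
                Finset.sum_congr rfl fun s'' _ => by
                  rw [hsum s'', if_congr (and_iff_right hb) rfl rfl]
            _ = hmmJoint p0 tr em y (j + d) x *
                  (tr (x (Fin.last (j + d))) (z (j + d + 1)) *
                    em (z (j + d + 1)) (y (j + d + 1))) := by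
                rw [Finset.sum_ite_eq' Finset.univ (z (j + d + 1))
                  (fun s'' => hmmJoint p0 tr em y (j + d) x *
                    (tr (x (Fin.last (j + d))) s'' * em s'' (y (j + d + 1)))),
                  if_pos (Finset.mem_univ _)]
            _ = _ := by rw [hxl, if_pos hb]
        · rw [if_neg hb, zero_mul]
          exact Finset.sum_eq_zero fun s'' _ => by
            rw [hsum s'', if_neg (fun hc => hb hc.1)]
      calc (∑ x : Fin (j + d + 1) → S, ∑ s'' : S,
              if ∀ i : Fin (j + d + 1 + 1), j ≤ (i : ℕ) ∧ (i : ℕ) ≤ j + d + 1 →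
                  (Fin.snoc x s'' : Fin (j + d + 1 + 1) → S) i = z (i : ℕ)
                then hmmJoint p0 tr em y (j + d + 1) (Fin.snoc x s'') else 0)
          = ∑ x : Fin (j + d + 1) → S,
              (if ∀ i : Fin (j + d + 1), j ≤ (i : ℕ) ∧ (i : ℕ) ≤ j + d → x i = z (i : ℕ)
                then hmmJoint p0 tr em y (j + d) x else 0) *
              (tr (z (j + d)) (z (j + d + 1)) * em (z (j + d + 1)) (y (j + d + 1))) :=
            Finset.sum_congr rfl fun x _ => inner x
        _ = _ := by
            rw [← Finset.sum_mul, ih, Finset.prod_Ico_succ_top (by omega : j ≤ j + d)]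
            ring

lemma blockH (p0 : S → ℝ) (tr : S → S → ℝ) (em : S → O → ℝ) (y : ℕ → O)
    (j d k : ℕ) (z : ℕ → S) (s' : S) :
    (∑ x : Fin (j + d + k + 1) → S,
        if (∀ i : Fin (j + d + k + 1), j ≤ (i : ℕ) ∧ (i : ℕ) ≤ j + d → x i = z (i : ℕ))
            ∧ x (Fin.last (j + d + k)) = s'
          then hmmJoint p0 tr em y (j + d + k) x else 0)
      = (Anum p0 tr em y j (z j) *
          ∏ i ∈ Finset.Ico j (j + d), (tr (z i) (z (i + 1)) * em (z (i + 1)) (y (i + 1)))) *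
        trC tr em y k (j + d) (z (j + d)) s' := by
  induction k generalizing s' with
  | zero =>
      show (∑ x : Fin (j + d + 1) → S,
          if (∀ i : Fin (j + d + 1), j ≤ (i : ℕ) ∧ (i : ℕ) ≤ j + d → x i = z (i : ℕ))
              ∧ x (Fin.last (j + d)) = s'
            then hmmJoint p0 tr em y (j + d) x else 0)
        = (Anum p0 tr em y j (z j) *
            ∏ i ∈ Finset.Ico j (j + d), (tr (z i) (z (i + 1)) * em (z (i + 1)) (y (i + 1)))) *
          trC tr em y 0 (j + d) (z (j + d)) s'
      by_cases hzs : s' = z (j + d)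
      · rw [trC, if_pos hzs, mul_one, ← blockG p0 tr em y j d z]
        refine Finset.sum_congr rfl fun x _ => if_congr ?_ rfl rfl
        constructor
        · exact fun h => h.1
        · intro h
          refine ⟨h, ?_⟩
          rw [hzs]
          simpa using h (Fin.last (j + d)) (by simp)
      · rw [trC, if_neg hzs, mul_zero]
        refine Finset.sum_eq_zero fun x _ => if_neg ?_
        rintro ⟨hb, hl⟩
        refine hzs ?_
        rw [← hl]
        simpa using hb (Fin.last (j + d)) (by simp)
  | succ k ih =>
      show (∑ x : Fin (j + d + k + 1 + 1) → S,
          if (∀ i : Fin (j + d + k + 1 + 1), j ≤ (i : ℕ) ∧ (i : ℕ) ≤ j + d → x i = z (i : ℕ))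
              ∧ x (Fin.last (j + d + k + 1)) = s'
            then hmmJoint p0 tr em y (j + d + k + 1) x else 0)
        = (Anum p0 tr em y j (z j) *
            ∏ i ∈ Finset.Ico j (j + d), (tr (z i) (z (i + 1)) * em (z (i + 1)) (y (i + 1)))) *
          trC tr em y (k + 1) (j + d) (z (j + d)) s'
      rw [sum_snoc (n := j + d + k + 1)]
      have inner : ∀ x : Fin (j + d + k + 1) → S,
          (∑ s'' : S,
            if (∀ i : Fin (j + d + k + 1 + 1), j ≤ (i : ℕ) ∧ (i : ℕ) ≤ j + d →
                  (Fin.snoc x s'' : Fin (j + d + k + 1 + 1) → S) i = z (i : ℕ))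
                ∧ (Fin.snoc x s'' : Fin (j + d + k + 1 + 1) → S) (Fin.last (j + d + k + 1)) = s'
              then hmmJoint p0 tr em y (j + d + k + 1) (Fin.snoc x s'') else 0)
          = if ∀ i : Fin (j + d + k + 1), j ≤ (i : ℕ) ∧ (i : ℕ) ≤ j + d → x i = z (i : ℕ)
              then hmmJoint p0 tr em y (j + d + k) x *
                (tr (x (Fin.last (j + d + k))) s' * em s' (y (j + d + k + 1)))
              else 0 := by
        intro x
        have hsum : ∀ s'' : S,
            (if (∀ i : Fin (j + d + k + 1 + 1), j ≤ (i : ℕ) ∧ (i : ℕ) ≤ j + d →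
                  (Fin.snoc x s'' : Fin (j + d + k + 1 + 1) → S) i = z (i : ℕ))
                ∧ (Fin.snoc x s'' : Fin (j + d + k + 1 + 1) → S) (Fin.last (j + d + k + 1)) = s'
              then hmmJoint p0 tr em y (j + d + k + 1) (Fin.snoc x s'') else 0)
            = if (∀ i : Fin (j + d + k + 1), j ≤ (i : ℕ) ∧ (i : ℕ) ≤ j + d → x i = z (i : ℕ))
                ∧ s'' = s'
              then hmmJoint p0 tr em y (j + d + k) x *
                (tr (x (Fin.last (j + d + k))) s'' * em s'' (y (j + d + k + 1)))
              else 0 := by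
          intro s''
          rw [joint_snoc]
          exact if_congr (and_congr (blk_snoc j (j + d) (j + d + k) (by omega) x s'' z)
            (by rw [Fin.snoc_last])) rfl rfl
        by_cases hb : ∀ i : Fin (j + d + k + 1), j ≤ (i : ℕ) ∧ (i : ℕ) ≤ j + d → x i = z (i : ℕ)
        · calc _ = ∑ s'' : S, (if s'' = s'
                  then hmmJoint p0 tr em y (j + d + k) x *
                    (tr (x (Fin.last (j + d + k))) s'' * em s'' (y (j + d + k + 1))) else 0) :=
                Finset.sum_congr rfl fun s'' _ => by
                  rw [hsum s'', if_congr (and_iff_right hb) rfl rfl]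
            _ = _ := by
                rw [Finset.sum_ite_eq' Finset.univ s'
                  (fun s'' => hmmJoint p0 tr em y (j + d + k) x *
                    (tr (x (Fin.last (j + d + k))) s'' * em s'' (y (j + d + k + 1)))),
                  if_pos (Finset.mem_univ _), if_pos hb]
        · rw [if_neg hb]
          exact Finset.sum_eq_zero fun s'' _ => by
            rw [hsum s'', if_neg (fun hc => hb hc.1)]
      calc (∑ x : Fin (j + d + k + 1) → S, ∑ s'' : S,
              if (∀ i : Fin (j + d + k + 1 + 1), j ≤ (i : ℕ) ∧ (i : ℕ) ≤ j + d →
                    (Fin.snoc x s'' : Fin (j + d + k + 1 + 1) → S) i = z (i : ℕ))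
                  ∧ (Fin.snoc x s'' : Fin (j + d + k + 1 + 1) → S) (Fin.last (j + d + k + 1)) = s'
                then hmmJoint p0 tr em y (j + d + k + 1) (Fin.snoc x s'') else 0)
          = ∑ x : Fin (j + d + k + 1) → S,
              (if ∀ i : Fin (j + d + k + 1), j ≤ (i : ℕ) ∧ (i : ℕ) ≤ j + d → x i = z (i : ℕ)
                then hmmJoint p0 tr em y (j + d + k) x *
                  (tr (x (Fin.last (j + d + k))) s' * em s' (y (j + d + k + 1)))
                else 0) := Finset.sum_congr rfl fun x _ => inner x
        _ = _ := by
            rw [sum_partition_last, trC, Finset.mul_sum]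
            refine Finset.sum_congr rfl fun s3 _ => ?_
            rw [← mul_assoc, ← ih s3, Finset.sum_mul]
            refine Finset.sum_congr rfl fun x _ => ?_
            by_cases h1 : x (Fin.last (j + d + k)) = s3
            · by_cases h2 : ∀ i : Fin (j + d + k + 1), j ≤ (i : ℕ) ∧ (i : ℕ) ≤ j + d →
                  x i = z (i : ℕ)
              · rw [if_pos h1, if_pos h2, if_pos ⟨h2, h1⟩, h1]
              · rw [if_pos h1, if_neg h2, if_neg (fun hc => h2 hc.1), zero_mul]
            · rw [if_neg h1, if_neg (fun hc => h1 hc.2), zero_mul]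

lemma joint_pos (p0 : S → ℝ) (tr : S → S → ℝ) (em : S → O → ℝ) (y : ℕ → O)
    (hp0 : ∀ s, 0 < p0 s) (htr : ∀ s s', 0 < tr s s') (hem : ∀ s o, 0 < em s o)
    (t : ℕ) (x : Fin (t + 1) → S) : 0 < hmmJoint p0 tr em y t x := by
  unfold hmmJoint
  exact mul_pos (mul_pos (hp0 _) (hem _ _))
    (Finset.prod_pos fun i _ => mul_pos (htr _ _) (hem _ _))

lemma Anum_pos (p0 : S → ℝ) (tr : S → S → ℝ) (em : S → O → ℝ) (y : ℕ → O)
    (hp0 : ∀ s, 0 < p0 s) (htr : ∀ s s', 0 < tr s s') (hem : ∀ s o, 0 < em s o)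
    (t : ℕ) (s : S) : 0 < Anum p0 tr em y t s := by
  rw [Anum]
  refine Finset.sum_pos' (fun x _ => ?_) ⟨fun _ => s, Finset.mem_univ _, ?_⟩
  · split
    · exact (joint_pos p0 tr em y hp0 htr hem t x).le
    · exact le_refl 0
  · rw [if_pos rfl]
    exact joint_pos p0 tr em y hp0 htr hem t _

lemma Z_pos (p0 : S → ℝ) (tr : S → S → ℝ) (em : S → O → ℝ) (y : ℕ → O)
    (hp0 : ∀ s, 0 < p0 s) (htr : ∀ s s', 0 < tr s s') (hem : ∀ s o, 0 < em s o)
    (hS : Nonempty S) (t : ℕ) : 0 < hmmZ p0 tr em y t := by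
  rw [hmmZ]
  exact Finset.sum_pos (fun x _ => joint_pos p0 tr em y hp0 htr hem t x)
    Finset.univ_nonempty

lemma merge_ifs {n : ℕ} (f : (Fin (n + 1) → S) → ℝ) (P Q : (Fin (n + 1) → S) → Prop)
    [DecidablePred P] [DecidablePred Q] (x : Fin (n + 1) → S) :
    (if Q x then (if P x then f x else 0) else 0) = if P x ∧ Q x then f x else 0 := by
  by_cases hP : P x <;> by_cases hQ : Q x <;> simp [hP, hQ]

/-- in a hidden Markov model, for `0 ≤ j < l ≤ T`,
`p(x_{j:l} | y_{0:T}) ∝ p(x_j | y_{0:j}) · (p(x_l | y_{0:T}) / p(x_l | y_{0:l})) ·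
∏_{i=j}^{l-1} p(x_{i+1}|x_i) p(y_{i+1}|x_{i+1})` as a function of `x_{j:l}`. -/
theorem stmt_6 (p0 : S → ℝ) (tr : S → S → ℝ) (em : S → O → ℝ) (y : ℕ → O)
    (hp0 : ∀ s, 0 < p0 s) (htr : ∀ s s', 0 < tr s s') (hem : ∀ s o, 0 < em s o)
    (T j l : ℕ) (hjl : j < l) (hlT : l ≤ T) :
    ∃ c > 0, ∀ z : ℕ → S,
      hmmCondBlock p0 tr em y T j l z =
        c * hmmFilter p0 tr em y j (z j) *
          (hmmMarginal p0 tr em y T l (by omega) (z l) / hmmFilter p0 tr em y l (z l)) *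
          ∏ i ∈ Finset.Ico j l, (tr (z i) (z (i + 1)) * em (z (i + 1)) (y (i + 1))) := by
  obtain ⟨d, rfl⟩ : ∃ d, l = j + d := ⟨l - j, by omega⟩
  obtain ⟨k, rfl⟩ : ∃ k, T = j + d + k := ⟨T - (j + d), by omega⟩
  by_cases hS : Nonempty S
  · have hZj := Z_pos p0 tr em y hp0 htr hem hS j
    have hZl := Z_pos p0 tr em y hp0 htr hem hS (j + d)
    have hZT := Z_pos p0 tr em y hp0 htr hem hS (j + d + k)
    refine ⟨hmmZ p0 tr em y j / hmmZ p0 tr em y (j + d), div_pos hZj hZl, fun z => ?_⟩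
    have hAl := Anum_pos p0 tr em y hp0 htr hem (j + d) (z (j + d))
    have hCB : hmmCondBlock p0 tr em y (j + d + k) j (j + d) z
        = (Anum p0 tr em y j (z j) *
            ∏ i ∈ Finset.Ico j (j + d), (tr (z i) (z (i + 1)) * em (z (i + 1)) (y (i + 1)))) *
          (∑ s' : S, trC tr em y k (j + d) (z (j + d)) s') / hmmZ p0 tr em y (j + d + k) := by
      rw [hmmCondBlock]
      congr 1
      calc (∑ x : Fin (j + d + k + 1) → S,
              if ∀ i : Fin (j + d + k + 1), j ≤ (i : ℕ) ∧ (i : ℕ) ≤ j + d → x i = z (i : ℕ)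
                then hmmJoint p0 tr em y (j + d + k) x else 0)
          = ∑ s' : S, ∑ x : Fin (j + d + k + 1) → S,
              if x (Fin.last (j + d + k)) = s' then
                (if ∀ i : Fin (j + d + k + 1), j ≤ (i : ℕ) ∧ (i : ℕ) ≤ j + d → x i = z (i : ℕ)
                  then hmmJoint p0 tr em y (j + d + k) x else 0) else 0 := sum_partition_last _
        _ = ∑ s' : S, ∑ x : Fin (j + d + k + 1) → S,
              if (∀ i : Fin (j + d + k + 1), j ≤ (i : ℕ) ∧ (i : ℕ) ≤ j + d → x i = z (i : ℕ))
                  ∧ x (Fin.last (j + d + k)) = s'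
                then hmmJoint p0 tr em y (j + d + k) x else 0 :=
            Finset.sum_congr rfl fun s' _ => Finset.sum_congr rfl fun x _ =>
              merge_ifs (hmmJoint p0 tr em y (j + d + k))
                (fun x => ∀ i : Fin (j + d + k + 1), j ≤ (i : ℕ) ∧ (i : ℕ) ≤ j + d → x i = z (i : ℕ))
                (fun x => x (Fin.last (j + d + k)) = s') x
        _ = ∑ s' : S, (Anum p0 tr em y j (z j) *
              ∏ i ∈ Finset.Ico j (j + d), (tr (z i) (z (i + 1)) * em (z (i + 1)) (y (i + 1)))) *
              trC tr em y k (j + d) (z (j + d)) s' :=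
            Finset.sum_congr rfl fun s' _ => blockH p0 tr em y j d k z s'
        _ = _ := (Finset.mul_sum _ _ _).symm
    have hM : ∀ h : j + d < j + d + k + 1,
        hmmMarginal p0 tr em y (j + d + k) (j + d) h (z (j + d))
          = Anum p0 tr em y (j + d) (z (j + d)) *
              (∑ s' : S, trC tr em y k (j + d) (z (j + d)) s') / hmmZ p0 tr em y (j + d + k) := by
      intro h
      rw [hmmMarginal]
      congr 1
      calc (∑ x : Fin (j + d + k + 1) → S,
              if x ⟨j + d, h⟩ = z (j + d) then hmmJoint p0 tr em y (j + d + k) x else 0)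
          = ∑ s' : S, ∑ x : Fin (j + d + k + 1) → S,
              if x (Fin.last (j + d + k)) = s' then
                (if x ⟨j + d, h⟩ = z (j + d) then hmmJoint p0 tr em y (j + d + k) x else 0)
              else 0 := sum_partition_last _
        _ = ∑ s' : S, ∑ x : Fin (j + d + k + 1) → S,
              if x ⟨j + d, h⟩ = z (j + d) ∧ x (Fin.last (j + d + k)) = s'
                then hmmJoint p0 tr em y (j + d + k) x else 0 :=
            Finset.sum_congr rfl fun s' _ => Finset.sum_congr rfl fun x _ =>
              merge_ifs (hmmJoint p0 tr em y (j + d + k))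
                (fun x => x ⟨j + d, h⟩ = z (j + d))
                (fun x => x (Fin.last (j + d + k)) = s') x
        _ = ∑ s' : S, Anum p0 tr em y (j + d) (z (j + d)) * trC tr em y k (j + d) (z (j + d)) s' :=
            Finset.sum_congr rfl fun s' _ => two_pin_eq p0 tr em y k (j + d) (z (j + d)) s'
        _ = _ := (Finset.mul_sum _ _ _).symm
    have hFj : hmmFilter p0 tr em y j (z j)
        = Anum p0 tr em y j (z j) / hmmZ p0 tr em y j := rfl
    have hFl : hmmFilter p0 tr em y (j + d) (z (j + d))
        = Anum p0 tr em y (j + d) (z (j + d)) / hmmZ p0 tr em y (j + d) := rfl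
    rw [hCB, hM, hFj, hFl]
    field_simp
  · exact ⟨1, one_pos, fun z => absurd ⟨z 0⟩ hS⟩
end
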